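/- Let U : ℕ → ℝ^{d×d}, let Z be its resolvent, let N be a positive integer and let 0 < r ≤ 1. Suppose all the series below converge and max_{1≤p≤d} ( Σ_{q=1}^d Σ_{i=0}^{N-1} Σ_{l=0}^∞ r^{-N(l+1)} |U(Nl+i)|_{p,q} ) < 1/(1 + r^{-N}). Then max_{1≤p≤d} ( Σ_{q=1}^d Σ_{i=0}^{N-1} Σ_{l=0}^∞ r^{-N(l+1)} |Z(Nl+i+1)|_{p,q} ) < 1. -/

import Mathlib

/-!
Weight the `m`-th term by `w m = r ^ (-N (⌊m / N⌋ + 1))`, so that the sums in the statement are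
the row sums `∑ q, ∑' m, w m * |Z (m + 1) p q|` regrouped by residues mod `N`. Since `r ≤ 1` and
`⌊(a + b + 1) / N⌋ ≤ ⌊a / N⌋ + ⌊b / N⌋ + 1`, the weight satisfies `w (a + b + 1) ≤ w a * w b`,
which matches the recursion `Z (n + 1) = U n + ∑_{j < n} U (n - 1 - j) Z (j + 1)`. Hence if the
weighted row sums of `|U|` are at most `A`, induction on the length of the partial sums bounds
those of `|Z (· + 1)|` by `B = A / (1 - A)` (the fixed point of `B = A + A * B`), and `B < 1`
because `A < 1 / (1 + r ^ (-N)) ≤ 1 / 2`.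
-/

open Finset

theorem Nat.add_add_one_div_le {N : ℕ} (hN : 0 < N) (a b : ℕ) :
    (a + b + 1) / N ≤ a / N + b / N + 1 := by
  have ha := Nat.lt_mul_div_succ a hN
  have hb := Nat.lt_mul_div_succ b hN
  rw [← Nat.lt_succ_iff, Nat.div_lt_iff_lt_mul hN]
  nlinarith

theorem Nat.summable_iff_forall_summable_mul_add {R : Type*} [AddCommGroup R] [UniformSpace R]
    [IsUniformAddGroup R] [CompleteSpace R] {N : ℕ} (hN : 0 < N) {f : ℕ → R} :
    Summable f ↔ ∀ i < N, Summable fun l => f (N * l + i) := by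
  have : NeZero N := ⟨hN.ne'⟩
  refine ⟨fun hf i _ => hf.comp_injective (i := (N * · + i)) fun a b h => by
    simpa [hN.ne'] using h, fun hf => ?_⟩
  have h : Summable fun n => ∑ a : ZMod N, {n : ℕ | (n : ZMod N) = a}.indicator f n :=
    summable_sum fun a _ => by
      rw [← ZMod.natCast_zmod_val a, summable_indicator_mod_iff_summable]
      exact hf _ (ZMod.val_lt a)
  rw [Finset.sum_indicator_mod N f, Finset.sum_fn]
  exact h

theorem Nat.tsum_eq_sum_range_tsum_mul_add {R : Type*} [AddCommGroup R] [UniformSpace R]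
    [IsUniformAddGroup R] [CompleteSpace R] [T0Space R] {N : ℕ} (hN : 0 < N) {f : ℕ → R}
    (hf : Summable f) : ∑' m, f m = ∑ i ∈ range N, ∑' l, f (N * l + i) := by
  obtain ⟨k, rfl⟩ : ∃ k, N = k + 1 := ⟨N - 1, by omega⟩
  rw [Nat.sumByResidueClasses hf (k + 1), ← Fin.sum_univ_eq_sum_range]
  refine sum_congr rfl fun i _ => tsum_congr fun l => ?_
  rw [add_comm]
  rfl

theorem sum_range_succ_sum_range_mul_le {R : Type*} [CommSemiring R] [PartialOrder R]
    [IsOrderedRing R] {g f : ℕ → R} (hg : ∀ a, 0 ≤ g a) (hf : ∀ b, 0 ≤ f b) (M : ℕ) :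
    ∑ n ∈ range (M + 1), ∑ j ∈ range n, g (n - 1 - j) * f j ≤
      (∑ a ∈ range M, g a) * ∑ b ∈ range M, f b := by
  rw [sum_comm' (t' := range M) (s' := fun j => Ico (j + 1) (M + 1))
      (by intro n j; simp only [mem_range, mem_Ico]; omega), mul_sum]
  refine sum_le_sum fun j hj => ?_
  rw [sum_Ico_eq_sum_range, ← sum_mul]
  refine mul_le_mul_of_nonneg_right ?_ (hf j)
  calc ∑ k ∈ range (M + 1 - (j + 1)), g (j + 1 + k - 1 - j)
      = ∑ k ∈ range (M - j), g k := by
        rw [show M + 1 - (j + 1) = M - j by omega]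
        exact sum_congr rfl fun k _ => by congr 1; omega
    _ ≤ ∑ a ∈ range M, g a :=
        sum_le_sum_of_subset_of_nonneg (range_subset_range.mpr (by omega)) fun a _ _ => hg a

structure IsResolvent {ι R : Type*} [Fintype ι] [DecidableEq ι] [Semiring R]
    (U Z : ℕ → Matrix ι ι R) : Prop where
  zero : Z 0 = 1
  succ (n : ℕ) : Z (n + 1) = ∑ j ∈ range (n + 1), U (n - j) * Z j

namespace IsResolvent

variable {ι : Type*} [Fintype ι] [DecidableEq ι]

theorem succ_eq_add_sum {R : Type*} [Semiring R] {U Z : ℕ → Matrix ι ι R}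
    (h : IsResolvent U Z) (n : ℕ) :
    Z (n + 1) = U n + ∑ j ∈ range n, U (n - 1 - j) * Z (j + 1) := by
  rw [h.succ, sum_range_succ', h.zero, Nat.sub_zero, mul_one, add_comm]
  refine congrArg (U n + ·) (sum_congr rfl fun j _ => ?_)
  rw [Nat.sub_sub, add_comm 1 j]

variable {U Z : ℕ → Matrix ι ι ℝ}

theorem abs_succ_apply_le (h : IsResolvent U Z) (n : ℕ) (p q : ι) :
    |Z (n + 1) p q| ≤ |U n p q| + ∑ j ∈ range n, ∑ k, |U (n - 1 - j) p k| * |Z (j + 1) k q| := by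
  rw [h.succ_eq_add_sum n, Matrix.add_apply, Matrix.sum_apply]
  refine (abs_add_le _ _).trans (add_le_add le_rfl ((abs_sum_le_sum_abs _ _).trans
    (sum_le_sum fun j _ => ?_)))
  rw [Matrix.mul_apply]
  exact (abs_sum_le_sum_abs _ _).trans_eq (by simp only [abs_mul])

variable {w : ℕ → ℝ} {c : ℝ}

theorem weighted_row_sum_succ_le (h : IsResolvent U Z) (hw0 : ∀ m, 0 ≤ w m)
    (hw : ∀ a b, w (a + b + 1) ≤ c * (w a * w b)) (n : ℕ) (p : ι) :
    ∑ q, w n * |Z (n + 1) p q| ≤ ∑ q, w n * |U n p q| +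
      c * ∑ k, ∑ j ∈ range n, w (n - 1 - j) * |U (n - 1 - j) p k| *
        ∑ q, w j * |Z (j + 1) k q| := by
  have hwn : ∀ j < n, w n ≤ c * (w (n - 1 - j) * w j) := fun j hj => by
    simpa only [show n - 1 - j + j + 1 = n by omega] using hw (n - 1 - j) j
  calc ∑ q, w n * |Z (n + 1) p q|
      ≤ ∑ q, (w n * |U n p q| + ∑ j ∈ range n, ∑ k,
          c * (w (n - 1 - j) * |U (n - 1 - j) p k| * (w j * |Z (j + 1) k q|))) := by
        refine sum_le_sum fun q _ => ?_
        refine (mul_le_mul_of_nonneg_left (h.abs_succ_apply_le n p q)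
          (hw0 n)).trans ?_
        rw [mul_add, mul_sum]
        refine add_le_add le_rfl (sum_le_sum fun j hj => ?_)
        rw [mul_sum]
        refine sum_le_sum fun k _ => ?_
        calc w n * (|U (n - 1 - j) p k| * |Z (j + 1) k q|)
            ≤ c * (w (n - 1 - j) * w j) * (|U (n - 1 - j) p k| * |Z (j + 1) k q|) :=
              mul_le_mul_of_nonneg_right (hwn j (mem_range.mp hj)) (by positivity)
          _ = _ := by ring
    _ = _ := by
        rw [sum_add_distrib, mul_sum]
        congr 1
        simp only [mul_sum]
        exact sum_comm.trans ((sum_congr rfl fun _ _ => sum_comm).trans sum_comm)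

theorem sum_range_weighted_row_sum_le (h : IsResolvent U Z) (hw0 : ∀ m, 0 ≤ w m)
    (hw : ∀ a b, w (a + b + 1) ≤ c * (w a * w b)) (hc : 0 ≤ c) {A : ℝ} (hcA : c * A < 1)
    (hU : ∀ p q, Summable fun m => w m * |U m p q|)
    (hA : ∀ p, ∑ q, ∑' m, w m * |U m p q| ≤ A) (M : ℕ) (p : ι) :
    ∑ m ∈ range M, ∑ q, w m * |Z (m + 1) p q| ≤ A / (1 - c * A) := by
  have hden : 0 < 1 - c * A := by linarith
  have hwU : ∀ p q m, 0 ≤ w m * |U m p q| := fun p q m => mul_nonneg (hw0 m) (abs_nonneg _)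
  have hwZ : ∀ p q m, 0 ≤ w m * |Z (m + 1) p q| := fun p q m => mul_nonneg (hw0 m) (abs_nonneg _)
  have hpartial : ∀ p q (s : Finset ℕ), ∑ m ∈ s, w m * |U m p q| ≤ ∑' m, w m * |U m p q| :=
    fun p q s => (hU p q).sum_le_tsum s fun m _ => hwU p q m
  induction M generalizing p with
  | zero =>
    have hA0 : 0 ≤ A := (sum_nonneg fun q _ => tsum_nonneg (hwU p q)).trans (hA p)
    simpa only [sum_range_zero] using div_nonneg hA0 hden.le
  | succ M ih =>
    set B := A / (1 - c * A)
    calc ∑ m ∈ range (M + 1), ∑ q, w m * |Z (m + 1) p q|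
        ≤ ∑ m ∈ range (M + 1), (∑ q, w m * |U m p q| +
            c * ∑ k, ∑ j ∈ range m, w (m - 1 - j) * |U (m - 1 - j) p k| *
              ∑ q, w j * |Z (j + 1) k q|) :=
          sum_le_sum fun m _ => h.weighted_row_sum_succ_le hw0 hw m p
      _ = ∑ q, ∑ m ∈ range (M + 1), w m * |U m p q| +
            c * ∑ k, ∑ m ∈ range (M + 1), ∑ j ∈ range m, w (m - 1 - j) * |U (m - 1 - j) p k| *
              ∑ q, w j * |Z (j + 1) k q| := by
          rw [sum_add_distrib, sum_comm, ← mul_sum, sum_comm (s := range (M + 1))]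
      _ ≤ A + c * ∑ k, (∑ a ∈ range M, w a * |U a p k|) *
            ∑ b ∈ range M, ∑ q, w b * |Z (b + 1) k q| := by
          gcongr with k
          · exact (sum_le_sum fun q _ => hpartial p q _).trans (hA p)
          · exact sum_range_succ_sum_range_mul_le (hwU p k)
              (fun b => sum_nonneg fun q _ => hwZ k q b) M
      _ ≤ A + c * ∑ k, (∑' a, w a * |U a p k|) * B := by
          gcongr with k
          exacts [sum_nonneg fun b _ => sum_nonneg fun q _ => hwZ k q b, tsum_nonneg (hwU p k),
            hpartial p k _, ih k]
      _ ≤ A + c * A * B := by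
          rw [← sum_mul, mul_assoc]
          gcongr
          exacts [(sum_nonneg fun m _ => sum_nonneg fun q _ => hwZ p q m).trans (ih p), hA p]
      _ = B := by rw [← mul_div_assoc, add_div' _ _ _ hden.ne']; ring

theorem summable_weighted_and_tsum_le (h : IsResolvent U Z) (hw0 : ∀ m, 0 ≤ w m)
    (hw : ∀ a b, w (a + b + 1) ≤ c * (w a * w b)) (hc : 0 ≤ c) {A : ℝ} (hcA : c * A < 1)
    (hU : ∀ p q, Summable fun m => w m * |U m p q|)
    (hA : ∀ p, ∑ q, ∑' m, w m * |U m p q| ≤ A) :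
    (∀ p q, Summable fun m => w m * |Z (m + 1) p q|) ∧
      ∀ p, ∑ q, ∑' m, w m * |Z (m + 1) p q| ≤ A / (1 - c * A) := by
  have hwZ : ∀ p q m, 0 ≤ w m * |Z (m + 1) p q| := fun p q m => mul_nonneg (hw0 m) (abs_nonneg _)
  have hrow := h.sum_range_weighted_row_sum_le hw0 hw hc hcA hU hA
  have hsummable : ∀ p q, Summable fun m => w m * |Z (m + 1) p q| := fun p q =>
    summable_of_sum_range_le (hwZ p q) fun M =>
      (sum_le_sum fun m _ => single_le_sum (fun q _ => hwZ p q m) (mem_univ q)).trans (hrow M p)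
  refine ⟨hsummable, fun p => ?_⟩
  rw [← Summable.tsum_finsetSum fun q _ => hsummable p q]
  exact Real.tsum_le_of_sum_range_le (fun m => sum_nonneg fun q _ => hwZ p q m) (hrow · p)

end IsResolvent

noncomputable def blockWeight (N : ℕ) (r : ℝ) (m : ℕ) : ℝ := (r ^ (N * (m / N + 1)))⁻¹

section BlockWeight

variable {N : ℕ} {r : ℝ}

theorem blockWeight_nonneg (hr : 0 ≤ r) (m : ℕ) : 0 ≤ blockWeight N r m :=
  inv_nonneg.mpr (pow_nonneg hr _)

theorem blockWeight_mul_add {i : ℕ} (hi : i < N) (l : ℕ) :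
    blockWeight N r (N * l + i) = (r ^ (N * (l + 1)))⁻¹ := by
  rw [blockWeight, Nat.mul_add_div (by omega), Nat.div_eq_of_lt hi, add_zero]

theorem blockWeight_add_add_one_le (hN : 0 < N) (hr0 : 0 < r) (hr1 : r ≤ 1) (a b : ℕ) :
    blockWeight N r (a + b + 1) ≤ blockWeight N r a * blockWeight N r b := by
  have hdiv : (a + b + 1) / N + 1 ≤ (a / N + 1) + (b / N + 1) := by
    have := Nat.add_add_one_div_le hN a b
    omega
  simp only [blockWeight, pow_mul, ← inv_pow, ← pow_add]
  exact pow_le_pow_right₀ (one_le_pow₀ ((one_le_inv₀ hr0).mpr hr1)) hdiv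

theorem summable_blockWeight_mul_iff (hN : 0 < N) {x : ℕ → ℝ} :
    Summable (fun m => blockWeight N r m * x m) ↔
      ∀ i < N, Summable fun l => x (N * l + i) / r ^ (N * (l + 1)) := by
  rw [Nat.summable_iff_forall_summable_mul_add hN]
  refine forall₂_congr fun i hi => ?_
  simp only [blockWeight_mul_add hi, inv_mul_eq_div]

theorem tsum_blockWeight_mul (hN : 0 < N) {x : ℕ → ℝ}
    (hx : Summable fun m => blockWeight N r m * x m) :
    ∑' m, blockWeight N r m * x m = ∑ i ∈ range N, ∑' l, x (N * l + i) / r ^ (N * (l + 1)) := by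
  rw [Nat.tsum_eq_sum_range_tsum_mul_add hN hx]
  refine sum_congr rfl fun i hi => ?_
  simp only [blockWeight_mul_add (mem_range.mp hi), inv_mul_eq_div]

end BlockWeight

/-- If `U` satisfies the stronger smallness condition with bound `1/(1 + r^{-N})`,
then the shifted resolvent satisfies the weighted norm bound `< 1`. -/
theorem stmt10 (d N : ℕ) (hd : 0 < d) (hN : 0 < N) (r : ℝ) (hr0 : 0 < r) (hr1 : r ≤ 1)
    (U Z : ℕ → Matrix (Fin d) (Fin d) ℝ)
    (hZ0 : Z 0 = 1)
    (hZ : ∀ n, Z (n + 1) = ∑ j ∈ Finset.range (n + 1), U (n - j) * Z j)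
    (hsum : ∀ (p q : Fin d) (i : ℕ), i < N →
      Summable (fun l : ℕ => |U (N * l + i) p q| / r ^ (N * (l + 1))))
    (hbound : ∀ p : Fin d,
      ∑ q : Fin d, ∑ i ∈ Finset.range N,
        ∑' l : ℕ, |U (N * l + i) p q| / r ^ (N * (l + 1)) < 1 / (1 + (r ^ N)⁻¹)) :
    (∀ (p q : Fin d) (i : ℕ), i < N →
      Summable (fun l : ℕ => |Z (N * l + i + 1) p q| / r ^ (N * (l + 1)))) ∧
    ∀ p : Fin d,
      ∑ q : Fin d, ∑ i ∈ Finset.range N,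
        ∑' l : ℕ, |Z (N * l + i + 1) p q| / r ^ (N * (l + 1)) < 1 := by
  have hU : ∀ p q, Summable fun m => blockWeight N r m * |U m p q| := fun p q =>
    (summable_blockWeight_mul_iff hN).mpr (hsum p q)
  have : Nonempty (Fin d) := ⟨⟨0, hd⟩⟩
  obtain ⟨p₀, hp₀⟩ := Finite.exists_max fun p => ∑ q, ∑' m, blockWeight N r m * |U m p q|
  set A := ∑ q, ∑' m, blockWeight N r m * |U m p₀ q|
  have hA : A < 1 / 2 := calc
    A < 1 / (1 + (r ^ N)⁻¹) := by
        simpa only [A, tsum_blockWeight_mul hN (hU p₀ _)] using hbound p₀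
    _ ≤ 1 / (1 + 1) := by
        gcongr
        exact (one_le_inv₀ (pow_pos hr0 N)).mpr (pow_le_one₀ hr0.le hr1)
    _ = 1 / 2 := by norm_num
  obtain ⟨hZsum, hZle⟩ := IsResolvent.summable_weighted_and_tsum_le ⟨hZ0, hZ⟩
    (blockWeight_nonneg hr0.le)
    (by simpa only [one_mul] using blockWeight_add_add_one_le hN hr0 hr1)
    zero_le_one (by linarith) hU hp₀
  have hZfib := fun p q => (summable_blockWeight_mul_iff hN).mp (hZsum p q)
  refine ⟨hZfib, fun p => ?_⟩
  calc ∑ q, ∑ i ∈ range N, ∑' l, |Z (N * l + i + 1) p q| / r ^ (N * (l + 1))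
      = ∑ q, ∑' m, blockWeight N r m * |Z (m + 1) p q| := by
        simp only [tsum_blockWeight_mul hN (hZsum p _)]
    _ ≤ A / (1 - 1 * A) := hZle p
    _ < 1 := by rw [div_lt_one (by linarith)]; linarith
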